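/- arXiv:alg-geom/9702004 — 10 statements merged into one kernel-verified Lean document; each statement's English description precedes it below -/
import Mathlib

section
/- Let n ≥ 2 be an integer and let O be an integral domain of characteristic zero such that no rational prime dividing n is a unit in O. Suppose α ∈ O has finite multiplicative order and (α−1)² ∈ nO. Then α^R(n) = 1, where R(n) = 1 for n ≥ 5, R(4) = 2, R(3) = 3, and R(2) = 4. -/
/-!
Let `d` be the order of `α`. For a prime `p ∣ n`, pick a maximal ideal `M ∋ p`; it contains
`α - 1`. Writing `d = p^k m` with `p ∤ m`, the element `γ = α^(p^k)` is `≡ 1 (mod M)`, so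
`1 + γ + ⋯ + γ^(m-1) ≡ m ≢ 0 (mod M)` and `γ^m = 1` forces `γ = 1`: thus `d` is a power of every
prime dividing `n`. If `d > 1` this makes `n = p^a` and `d = p^k` with `k ≥ 1`. Since `d` is
divisible by `(α - 1)^(d-1)`, we get `p^(a(d-1)) ∣ n^(d-1) ∣ d^2 = p^(2k)`, and as `p` is neither
zero nor a unit, `a (p^k - 1) ≤ 2k`. The few solutions of this inequality give `d ∣ R(n)`.
-/

/-- R(n) = 1 for n ≥ 5, R(4) = 2, R(3) = 3, R(2) = 4. -/
def Rval (n : ℕ) : ℕ := if 5 ≤ n then 1 else if n = 4 then 2 else if n = 3 then 3 else 4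

open Finset

section OrderOfRootOfUnity

variable {R : Type*} [CommRing R]

theorem natCast_notMem_of_coprime {I : Ideal R} (hI : I ≠ ⊤) {p m : ℕ} (hp : (p : R) ∈ I)
    (hpm : p.Coprime m) : (m : R) ∉ I := by
  intro hm
  obtain ⟨u, v, huv⟩ := (Nat.isCoprime_iff_coprime.mpr hpm).map (Int.castRingHom R)
  refine hI ((Ideal.eq_top_iff_one I).mpr ?_)
  rw [← huv]
  simpa using I.add_mem (I.mul_mem_left u hp) (I.mul_mem_left v hm)

variable [IsDomain R]

theorem eq_one_of_pow_eq_one_of_sub_one_mem {I : Ideal R} {γ : R} {m : ℕ} (hγ : γ - 1 ∈ I)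
    (hm : (m : R) ∉ I) (hpow : γ ^ m = 1) : γ = 1 := by
  have hγ_mod : Ideal.Quotient.mk I γ = 1 := by
    simpa using Ideal.Quotient.eq.mpr hγ
  have hsum_mod : Ideal.Quotient.mk I (∑ i ∈ range m, γ ^ i) = Ideal.Quotient.mk I (m : R) := by
    simp [map_sum, hγ_mod]
  have hsum : ∑ i ∈ range m, γ ^ i ∉ I := by
    rwa [← Ideal.Quotient.eq_zero_iff_mem, hsum_mod, Ideal.Quotient.eq_zero_iff_mem]
  have hprod : (∑ i ∈ range m, γ ^ i) * (γ - 1) = 0 := by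
    rw [geom_sum_mul, hpow, sub_self]
  have hsum0 : ∑ i ∈ range m, γ ^ i ≠ 0 := fun h => hsum (h ▸ I.zero_mem)
  exact sub_eq_zero.mp ((mul_eq_zero.mp hprod).resolve_left hsum0)

theorem orderOf_eq_prime_pow_of_sub_one_mem {I : Ideal R} (hI : I ≠ ⊤) {p : ℕ} (hp : p.Prime)
    (hpI : (p : R) ∈ I) {α : R} (hα : α - 1 ∈ I) (hfin : IsOfFinOrder α) :
    orderOf α = p ^ (orderOf α).factorization p := by
  set d := orderOf α
  have hd : d ≠ 0 := hfin.orderOf_pos.ne'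
  have hdecomp : p ^ d.factorization p * (d / p ^ d.factorization p) = d :=
    Nat.ordProj_mul_ordCompl_eq_self d p
  have hγ : α ^ p ^ d.factorization p - 1 ∈ I :=
    I.mem_of_dvd (sub_one_dvd_pow_sub_one α _) hα
  have hγ_pow : (α ^ p ^ d.factorization p) ^ (d / p ^ d.factorization p) = 1 := by
    rw [← pow_mul, hdecomp, pow_orderOf_eq_one]
  have hγ_one := eq_one_of_pow_eq_one_of_sub_one_mem hγ
    (natCast_notMem_of_coprime hI hpI (Nat.coprime_ordCompl hp hd)) hγ_pow
  exact Nat.dvd_antisymm (orderOf_dvd_of_pow_eq_one hγ_one) (Nat.ordProj_dvd d p)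

theorem orderOf_eq_prime_pow_of_dvd_sq_sub_one {p : ℕ} (hp : p.Prime) (hunit : ¬IsUnit (p : R))
    {α : R} (hdvd : (p : R) ∣ (α - 1) ^ 2) (hfin : IsOfFinOrder α) :
    orderOf α = p ^ (orderOf α).factorization p := by
  have hspan : Ideal.span {(p : R)} ≠ ⊤ := by
    rwa [Ne, Ideal.span_singleton_eq_top]
  obtain ⟨M, hM, hle⟩ := Ideal.exists_le_maximal _ hspan
  have hpM : (p : R) ∈ M := hle (Ideal.mem_span_singleton_self _)
  have hα : α - 1 ∈ M := hM.isPrime.mem_of_pow_mem 2 (M.mem_of_dvd hdvd hpM)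
  exact orderOf_eq_prime_pow_of_sub_one_mem hM.ne_top hp hpM hα hfin

theorem IsPrimitiveRoot.pow_pred_dvd_sq_of_dvd_sq_sub_one {α x : R} {d : ℕ}
    (hα : IsPrimitiveRoot α d) (hd : 0 < d) (hx : x ∣ (α - 1) ^ 2) :
    x ^ (d - 1) ∣ (d : R) ^ 2 := by
  obtain ⟨z, -, hz⟩ := hα.self_sub_one_pow_dvd_order (Nat.sub_lt hd one_pos)
  rw [hz, mul_pow, ← pow_mul, mul_comm (d - 1), pow_mul]
  exact (pow_dvd_pow_of_dvd hx _).mul_left _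

end OrderOfRootOfUnity

theorem eq_minFac_pow_of_forall_prime_dvd {n d : ℕ} (hn : n ≠ 0) (hd : d ≠ 1)
    (h : ∀ q, q.Prime → q ∣ n → d = q ^ d.factorization q) :
    n = n.minFac ^ n.primeFactorsList.length := by
  refine Nat.eq_prime_pow_of_unique_prime_dvd hn fun {q} hq hqn => ?_
  have hmin : n.minFac.Prime := Nat.minFac_prime fun h1 => hq.not_dvd_one (h1 ▸ hqn)
  have hqd : q ∣ d := by
    rw [h q hq hqn]
    exact dvd_pow_self q fun h0 => hd (by rw [h q hq hqn, h0, pow_zero])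
  rw [h _ hmin n.minFac_dvd] at hqd
  exact (Nat.prime_dvd_prime_iff_eq hq hmin).mp (hq.dvd_of_dvd_pow hqd)

theorem add_one_lt_two_pow_of_three_le {k : ℕ} (hk : 3 ≤ k) : 2 * k + 1 < 2 ^ k := by
  have h := Nat.lt_two_pow_self (n := k - 3)
  have h8 : 2 ^ k = 2 ^ (k - 3) * 8 := by
    rw [show 8 = 2 ^ 3 from rfl, ← pow_add, Nat.sub_add_cancel hk]
  omega

theorem pow_dvd_Rval_of_mul_pow_sub_one_le {p k a : ℕ} (hp : 2 ≤ p) (hk : 1 ≤ k) (ha : 1 ≤ a)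
    (h : a * (p ^ k - 1) ≤ 2 * k) : p ^ k ∣ Rval (p ^ a) := by
  have hp_le : p ≤ p ^ k := Nat.le_self_pow (by omega) p
  have hpk : p ^ k ≤ 2 * k + 1 := by
    have : p ^ k - 1 ≤ a * (p ^ k - 1) := Nat.le_mul_of_pos_left _ ha
    omega
  have hk2 : k ≤ 2 := by
    by_contra! hk3
    have := add_one_lt_two_pow_of_three_le hk3
    have := Nat.pow_le_pow_left hp k
    omega
  have hp5 : p ≤ 5 := by omega
  have ha4 : a ≤ 4 := (Nat.le_mul_of_pos_right a (by omega : 0 < p ^ k - 1)).trans (by omega)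
  interval_cases k <;> interval_cases p <;> interval_cases a <;> simp_all [Rval]

theorem stmt_0 (n : ℕ) (hn : 2 ≤ n) (O : Type*) [CommRing O] [IsDomain O] [CharZero O]
    (hnu : ∀ p : ℕ, p.Prime → p ∣ n → ¬ IsUnit ((p : O)))
    (α : O) (hord : ∃ k : ℕ, 1 ≤ k ∧ α ^ k = 1)
    (hcong : ∃ β : O, (α - 1) ^ 2 = (n : O) * β) :
    α ^ (Rval n) = 1 := by
  have hfin : IsOfFinOrder α := isOfFinOrder_iff_pow_eq_one.mpr hord
  have hn_dvd : (n : O) ∣ (α - 1) ^ 2 := hcong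
  set d := orderOf α
  have hd_pow (q : ℕ) (hq : q.Prime) (hqn : q ∣ n) : d = q ^ d.factorization q :=
    orderOf_eq_prime_pow_of_dvd_sq_sub_one hq (hnu q hq hqn)
      ((Nat.cast_dvd_cast hqn).trans hn_dvd) hfin
  rcases eq_or_ne d 1 with hd1 | hd1
  · rw [orderOf_eq_one_iff.mp hd1, one_pow]
  set p := n.minFac
  have hp : p.Prime := Nat.minFac_prime (by omega)
  have hdk := hd_pow p hp n.minFac_dvd
  have hk : 1 ≤ d.factorization p := Nat.pos_of_ne_zero fun h => hd1 (by rw [hdk, h, pow_zero])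
  set a := n.primeFactorsList.length
  have hn_pow : n = p ^ a := eq_minFac_pow_of_forall_prime_dvd (by omega) hd1 hd_pow
  have ha : 1 ≤ a := Nat.pos_of_ne_zero fun h => by
    rw [h, pow_zero] at hn_pow; omega
  have hdvd : (n : O) ^ (d - 1) ∣ (d : O) ^ 2 :=
    (IsPrimitiveRoot.orderOf α).pow_pred_dvd_sq_of_dvd_sq_sub_one hfin.orderOf_pos hn_dvd
  rw [hn_pow, hdk] at hdvd
  push_cast at hdvd
  rw [← pow_mul, ← pow_mul, pow_dvd_pow_iff (Nat.cast_ne_zero.mpr hp.ne_zero)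
    (hnu p hp n.minFac_dvd)] at hdvd
  refine orderOf_dvd_iff_pow_eq_one.mp (show d ∣ Rval n from ?_)
  rw [hdk, hn_pow]
  exact pow_dvd_Rval_of_mul_pow_sub_one_le hp.two_le hk ha (by rwa [mul_comm 2])
end

section
/- Let O be an integral domain of characteristic zero, ℓ a prime, and k, r, m positive integers with k ≥ m·φ(ℓ^r). If α ∈ O satisfies α^(ℓ^r) = 1, then (α−1)^k ∈ ℓ^m·ℤ[α], where ℤ[α] is the subring of O generated by α. -/
lemma key_lemma {O : Type*} [CommRing O] [IsDomain O] {ℓ s : ℕ} (hℓ : ℓ.Prime) (hs : 1 ≤ s)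
    {α : O} (hα : IsPrimitiveRoot α (ℓ ^ s)) :
    ∃ β ∈ Subring.closure ({α} : Set O), (α - 1) ^ Nat.totient (ℓ ^ s) = (ℓ : O) * β := by
  haveI : Fact ℓ.Prime := ⟨hℓ⟩
  have hn0 : 0 < ℓ ^ s := pow_pos hℓ.pos s
  haveI : NeZero (ℓ ^ s) := ⟨hn0.ne'⟩
  set S := primitiveRoots (ℓ ^ s) O with hS
  have hcard : S.card = Nat.totient (ℓ ^ s) := hα.card_primitiveRoots
  have hprod : ∏ μ ∈ S, (1 - μ) = (ℓ : O) := by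
    have h1 := Polynomial.cyclotomic_eq_prod_X_sub_primitiveRoots hα
    have h2 : Polynomial.eval 1 (Polynomial.cyclotomic (ℓ ^ s) O) = (ℓ : O) := by
      obtain ⟨t, rfl⟩ : ∃ t, s = t + 1 := ⟨s - 1, (Nat.succ_pred_eq_of_pos hs).symm⟩
      exact Polynomial.eval_one_cyclotomic_prime_pow t
    rw [h1] at h2
    simpa [Polynomial.eval_prod] using h2
  have hch : ∀ μ : O, ∃ w : O, μ ∈ S →
      w ∈ Subring.closure ({α} : Set O) ∧ α - 1 = (μ - 1) * w := by
    intro μ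
    by_cases hμ : μ ∈ S
    · have hμprim : IsPrimitiveRoot μ (ℓ ^ s) := (mem_primitiveRoots hn0).mp hμ
      obtain ⟨i, -, hi⟩ := hα.eq_pow_of_pow_eq_one hμprim.pow_eq_one
      obtain ⟨j, -, hj⟩ := hμprim.eq_pow_of_pow_eq_one hα.pow_eq_one
      refine ⟨∑ i ∈ Finset.range j, μ ^ i, fun _ => ⟨?_, ?_⟩⟩
      · refine sum_mem fun i _ => pow_mem ?_ i
        rw [← hi]
        exact pow_mem (Subring.subset_closure (Set.mem_singleton α)) _
      · rw [mul_comm, geom_sum_mul, hj]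
    · exact ⟨0, fun h => absurd h hμ⟩
  choose w hw using hch
  refine ⟨(-1) ^ Nat.totient (ℓ ^ s) * ∏ μ ∈ S, w μ, ?_, ?_⟩
  · exact mul_mem (pow_mem (neg_mem (one_mem _)) _)
      (prod_mem fun μ hμ => ((hw μ) hμ).1)
  · calc (α - 1) ^ Nat.totient (ℓ ^ s) = ∏ _μ ∈ S, (α - 1) := by
          rw [Finset.prod_const, hcard]
      _ = ∏ μ ∈ S, (μ - 1) * w μ := Finset.prod_congr rfl fun μ hμ => ((hw μ) hμ).2
      _ = (∏ μ ∈ S, (μ - 1)) * ∏ μ ∈ S, w μ := Finset.prod_mul_distrib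
      _ = ((-1) ^ S.card * ∏ μ ∈ S, (1 - μ)) * ∏ μ ∈ S, w μ := by
          congr 1
          rw [← Finset.prod_const (-1 : O), ← Finset.prod_mul_distrib]
          exact Finset.prod_congr rfl fun μ _ => by ring
      _ = (ℓ : O) * ((-1) ^ Nat.totient (ℓ ^ s) * ∏ μ ∈ S, w μ) := by
          rw [hprod, hcard]; ring

theorem stmt_2 (O : Type*) [CommRing O] [IsDomain O] [CharZero O]
    (ℓ : ℕ) (hℓ : ℓ.Prime) (k r m : ℕ) (hk : 1 ≤ k) (hr : 1 ≤ r) (hm : 1 ≤ m)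
    (hkm : m * Nat.totient (ℓ ^ r) ≤ k)
    (α : O) (hα : α ^ (ℓ ^ r) = 1) :
    ∃ β ∈ Subring.closure ({α} : Set O), (α - 1) ^ k = (ℓ : O) ^ m * β := by
  by_cases h1 : α = 1
  · refine ⟨0, zero_mem _, ?_⟩
    rw [h1, sub_self, zero_pow (by omega), mul_zero]
  · have hdvd : orderOf α ∣ ℓ ^ r := orderOf_dvd_of_pow_eq_one hα
    obtain ⟨s, hsr, hso⟩ := (Nat.dvd_prime_pow hℓ).mp hdvd
    have hs1 : 1 ≤ s := by
      rcases Nat.eq_zero_or_pos s with hz | hp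
      · rw [hz, pow_zero] at hso
        exact absurd (orderOf_eq_one_iff.mp hso) h1
      · exact hp
    have hprim : IsPrimitiveRoot α (ℓ ^ s) := hso ▸ IsPrimitiveRoot.orderOf α
    obtain ⟨β, hβmem, hβ⟩ := key_lemma hℓ hs1 hprim
    have hle : Nat.totient (ℓ ^ s) ≤ Nat.totient (ℓ ^ r) :=
      Nat.le_of_dvd (Nat.totient_pos.mpr (pow_pos hℓ.pos r))
        (Nat.totient_dvd_of_dvd (pow_dvd_pow ℓ hsr))
    set t := m * Nat.totient (ℓ ^ s) with ht
    have htk : t ≤ k := le_trans (Nat.mul_le_mul_left m hle) hkm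
    refine ⟨(α - 1) ^ (k - t) * β ^ m, ?_, ?_⟩
    · have hαcl : α ∈ Subring.closure ({α} : Set O) :=
        Subring.subset_closure (Set.mem_singleton α)
      exact mul_mem (pow_mem (sub_mem hαcl (one_mem _)) _) (pow_mem hβmem _)
    · calc (α - 1) ^ k = (α - 1) ^ (k - t) * ((α - 1) ^ Nat.totient (ℓ ^ s)) ^ m := by
            rw [← pow_mul, Nat.mul_comm, ← pow_add, Nat.sub_add_cancel htk]
        _ = (α - 1) ^ (k - t) * ((ℓ : O) * β) ^ m := by rw [hβ]
        _ = (ℓ : O) ^ m * ((α - 1) ^ (k - t) * β ^ m) := by rw [mul_pow]; ring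
end

section
/- Let n ≥ 1, let M and N be finite abelian groups killed by n, and let e : M × N → ℤ/nℤ be a nondegenerate bilinear pairing. Let σ be an automorphism of M and τ an automorphism of N satisfying e(σx, τy) = e(x,y) for all x, y. Let S ⊆ M be a subgroup with σS = S, and define S^⊥ = {y ∈ N : e(x,y) = 0 for all x ∈ S}. If σ = 1 on S and τ = 1 on S^⊥, then (σ−1)² = 0 on M. -/
theorem stmt_6 (n : ℕ) (hn : 1 ≤ n)
    (M N : Type*) [AddCommGroup M] [AddCommGroup N] [Finite M] [Finite N]
    (hM : ∀ x : M, n • x = 0) (hN : ∀ y : N, n • y = 0)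
    (e : M →+ N →+ ZMod n)
    (hnd1 : ∀ x : M, (∀ y : N, e x y = 0) → x = 0)
    (hnd2 : ∀ y : N, (∀ x : M, e x y = 0) → y = 0)
    (σ : M ≃+ M) (τ : N ≃+ N)
    (hcompat : ∀ x : M, ∀ y : N, e (σ x) (τ y) = e x y)
    (S : AddSubgroup M) (hSstab : ∀ x ∈ S, σ x ∈ S)
    (hσS : ∀ x ∈ S, σ x = x)
    (hτS : ∀ y : N, (∀ x ∈ S, e x y = 0) → τ y = y) :
    ∀ x : M, σ (σ x) - 2 • σ x + x = 0 := by
  intro x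
  apply hnd1
  intro y
  obtain ⟨z, rfl⟩ : ∃ z, τ z = y := ⟨τ.symm y, τ.apply_symm_apply y⟩
  -- τ z - z ∈ S^⊥
  have hperp : ∀ s ∈ S, e s (τ z - z) = 0 := by
    intro s hs
    have h := hcompat s z
    rw [hσS s hs] at h
    simp [map_sub, h]
  have hfix : τ (τ z - z) = τ z - z := hτS _ hperp
  -- e (σ x - x) (τ z - z) = 0
  have key : e (σ x - x) (τ z - z) = 0 := by
    have h := hcompat x (τ z - z)
    rw [hfix] at h
    simp only [map_sub, AddMonoidHom.sub_apply] at h ⊢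
    rw [sub_eq_zero]
    linear_combination h
  have h1 : e (σ (σ x) - σ x) (τ z) = e (σ x - x) z := by
    have h := hcompat (σ x - x) z
    simpa [map_sub] using h
  have expand : σ (σ x) - 2 • σ x + x = (σ (σ x) - σ x) - (σ x - x) := by
    abel
  rw [expand, map_sub, AddMonoidHom.sub_apply, h1]
  simp only [map_sub, AddMonoidHom.sub_apply] at key ⊢
  linear_combination -key
end

section
/- Let n ≥ 1, let M and N be finite abelian groups killed by n with a nondegenerate bilinear pairing e : M × N → ℤ/nℤ, and let σ ∈ Aut(M), τ ∈ Aut(N) satisfy e(σx, τy) = e(x,y). Let S = M^σ = {x ∈ M : σx = x} and S^⊥ = {y ∈ N : e(x,y) = 0 for all x ∈ S}. If (σ−1)²M = 0, then τ = 1 on S^⊥ and S^⊥ = (τ−1)N. -/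
/-!
Write `f = σ - 1` and `g = τ - 1`. Compatibility of `σ, τ` with `e` gives
`e (f x) y = -e (σ x) (g y)` and `e x (g y) = -e (f x) (τ y)`, so `ker g` is the annihilator of
`f M`, and `g N` annihilates `S = ker f`. Since `f² = 0` we have `f M ⊆ S`, hence
`S^⊥ ⊆ (f M)^⊥ = ker g`: this is the first claim. For the second, `g N ⊆ S^⊥` and a count
closes the gap: an annihilator `H^⊥` embeds into `Hom(M ⧸ H, ℤ/n)`, so `#H^⊥ ≤ #(M ⧸ H)`; this
gives `#M = #N`, `#S^⊥ ≤ #(f M)` and `#ker g ≤ #M / #(f M)`, i.e. `#(f M) ≤ #(g N)`.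
-/

open Function

theorem card_addMonoidHom_zmod_le (n : ℕ) [NeZero n] (A : Type*) [AddCommGroup A] [Finite A] :
    Nat.card (A →+ ZMod n) ≤ Nat.card A := by
  have := Fintype.ofFinite A
  calc Nat.card (A →+ ZMod n) ≤ Nat.card (AddChar A ℂ) :=
        Nat.card_le_card_of_injective _
          (AddChar.compAddMonoidHom_injective_right _ ZMod.injective_stdAddChar)
    _ = Nat.card A := by simp [Nat.card_eq_fintype_card]

theorem AddMonoidHom.card_range_mul_card_ker {G H : Type*} [AddGroup G] [AddGroup H]
    (f : G →+ H) : Nat.card f.range * Nat.card f.ker = Nat.card G := by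
  rw [AddSubgroup.card_eq_card_quotient_mul_card_addSubgroup f.ker,
    Nat.card_congr (QuotientAddGroup.quotientKerEquivRange f).toEquiv]

namespace AddMonoidHom

variable {M N R : Type*} [AddCommGroup M] [AddCommGroup N] [AddCommGroup R]

def annihilator (e : M →+ N →+ R) (H : AddSubgroup M) : AddSubgroup N where
  carrier := {y | ∀ x ∈ H, e x y = 0}
  zero_mem' x _ := map_zero (e x)
  add_mem' ha hb x hx := by rw [map_add, ha x hx, hb x hx, add_zero]
  neg_mem' ha x hx := by rw [map_neg, ha x hx, neg_zero]

section

variable (e : M →+ N →+ R)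

theorem mem_annihilator {H : AddSubgroup M} {y : N} :
    y ∈ e.annihilator H ↔ ∀ x ∈ H, e x y = 0 :=
  Iff.rfl

theorem annihilator_anti {H K : AddSubgroup M} (hHK : H ≤ K) :
    e.annihilator K ≤ e.annihilator H :=
  fun _ hy x hx => hy x (hHK hx)

theorem annihilator_bot : e.annihilator ⊥ = ⊤ :=
  eq_top_iff.mpr fun y _ x hx => by rw [AddSubgroup.mem_bot.mp hx, map_zero, zero_apply]

end

section ZMod

variable {n : ℕ} [NeZero n] [Finite M] (e : M →+ N →+ ZMod n)

theorem card_annihilator_le (he : ∀ y, (∀ x, e x y = 0) → y = 0) (H : AddSubgroup M) :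
    Nat.card (e.annihilator H) ≤ Nat.card (M ⧸ H) := by
  have := DFunLike.finite (M ⧸ H →+ ZMod n)
  let restrict : e.annihilator H → (M ⧸ H →+ ZMod n) :=
    fun y => QuotientAddGroup.lift H (e.flip y) y.2
  have h_inj : Injective restrict := by
    intro y y' h
    refine Subtype.ext <| sub_eq_zero.mp <| he _ fun x => ?_
    have := DFunLike.congr_fun h (x : M ⧸ H)
    rw [map_sub, sub_eq_zero]
    exact this
  exact (Nat.card_le_card_of_injective restrict h_inj).trans (card_addMonoidHom_zmod_le n _)

theorem card_le_of_nondegenerate (he : ∀ y, (∀ x, e x y = 0) → y = 0) :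
    Nat.card N ≤ Nat.card M := by
  simpa [annihilator_bot, AddSubgroup.card_top,
    Nat.card_congr (QuotientAddGroup.quotientBot (G := M)).toEquiv]
    using e.card_annihilator_le he ⊥

end ZMod

end AddMonoidHom

namespace AddEquiv

variable {M : Type*} [AddCommGroup M] (σ : M ≃+ M)

theorem mem_ker_toAddMonoidHom_sub_id {x : M} :
    x ∈ (σ.toAddMonoidHom - .id M).ker ↔ σ x = x :=
  sub_eq_zero

theorem mem_range_toAddMonoidHom_sub_id {y : M} :
    y ∈ (σ.toAddMonoidHom - .id M).range ↔ ∃ z, σ z - z = y :=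
  Iff.rfl

theorem range_toAddMonoidHom_sub_id_le_ker (hσ : ∀ x, σ (σ x) - 2 • σ x + x = 0) :
    (σ.toAddMonoidHom - .id M).range ≤ (σ.toAddMonoidHom - .id M).ker := by
  rintro _ ⟨x, rfl⟩
  rw [mem_ker_toAddMonoidHom_sub_id, ← sub_eq_zero, ← hσ x]
  simp only [AddMonoidHom.sub_apply, coe_toAddMonoidHom, AddMonoidHom.id_apply, map_sub]
  abel

end AddEquiv

section Compatible

variable {M N R : Type*} [AddCommGroup M] [AddCommGroup N] [AddCommGroup R]
  {e : M →+ N →+ R} {σ : M ≃+ M} {τ : N ≃+ N}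

theorem pairing_sub_self_left (hcompat : ∀ x y, e (σ x) (τ y) = e x y) (x : M) (y : N) :
    e (σ x - x) y = -e (σ x) (τ y - y) := by
  rw [map_sub, map_sub, AddMonoidHom.sub_apply, hcompat, neg_sub]

theorem pairing_sub_self_right (hcompat : ∀ x y, e (σ x) (τ y) = e x y) (x : M) (y : N) :
    e x (τ y - y) = -e (σ x - x) (τ y) := by
  rw [map_sub, map_sub, AddMonoidHom.sub_apply, hcompat, neg_sub]

variable (σ τ)

theorem range_sub_id_le_annihilator_ker (hcompat : ∀ x y, e (σ x) (τ y) = e x y) :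
    (τ.toAddMonoidHom - .id N).range ≤ e.annihilator (σ.toAddMonoidHom - .id M).ker := by
  rintro _ ⟨z, rfl⟩ x hx
  rw [σ.mem_ker_toAddMonoidHom_sub_id] at hx
  exact (pairing_sub_self_right hcompat x z).trans (by rw [hx, sub_self, map_zero,
    AddMonoidHom.zero_apply, neg_zero])

theorem ker_sub_id_le_annihilator_range (hcompat : ∀ x y, e (σ x) (τ y) = e x y) :
    (τ.toAddMonoidHom - .id N).ker ≤ e.annihilator (σ.toAddMonoidHom - .id M).range := by
  rintro y hy _ ⟨x, rfl⟩
  rw [τ.mem_ker_toAddMonoidHom_sub_id] at hy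
  exact (pairing_sub_self_left hcompat x y).trans (by rw [hy, sub_self, map_zero, neg_zero])

theorem annihilator_range_sub_id_le_ker (hcompat : ∀ x y, e (σ x) (τ y) = e x y)
    (he : ∀ y, (∀ x, e x y = 0) → y = 0) :
    e.annihilator (σ.toAddMonoidHom - .id M).range ≤ (τ.toAddMonoidHom - .id N).ker := by
  intro y hy
  rw [τ.mem_ker_toAddMonoidHom_sub_id, ← sub_eq_zero]
  refine he _ fun x => ?_
  obtain ⟨x, rfl⟩ := σ.surjective x
  rw [← neg_eq_zero, ← pairing_sub_self_left hcompat]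
  exact hy _ ⟨x, rfl⟩

end Compatible

section Counting

variable {n : ℕ} [NeZero n] {M N : Type*} [AddCommGroup M] [AddCommGroup N] [Finite M] [Finite N]
  {e : M →+ N →+ ZMod n} (σ : M ≃+ M) (τ : N ≃+ N)

theorem card_range_sub_id_le (hcompat : ∀ x y, e (σ x) (τ y) = e x y)
    (hnd1 : ∀ x, (∀ y, e x y = 0) → x = 0) (hnd2 : ∀ y, (∀ x, e x y = 0) → y = 0) :
    Nat.card (σ.toAddMonoidHom - .id M).range ≤ Nat.card (τ.toAddMonoidHom - .id N).range := by
  set f := σ.toAddMonoidHom - .id M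
  set g := τ.toAddMonoidHom - .id N
  have h_card : Nat.card M = Nat.card N :=
    le_antisymm (e.flip.card_le_of_nondegenerate hnd1) (e.card_le_of_nondegenerate hnd2)
  have h_ker : Nat.card g.ker ≤ Nat.card (M ⧸ f.range) :=
    (AddSubgroup.card_le_of_le (ker_sub_id_le_annihilator_range σ τ hcompat)).trans
      (e.card_annihilator_le hnd2 _)
  refine Nat.le_of_mul_le_mul_right ?_ (Nat.card_pos : 0 < Nat.card g.ker)
  calc Nat.card f.range * Nat.card g.ker ≤ Nat.card f.range * Nat.card (M ⧸ f.range) :=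
        Nat.mul_le_mul_left _ h_ker
    _ = Nat.card M := by rw [mul_comm, ← AddSubgroup.card_eq_card_quotient_mul_card_addSubgroup]
    _ = Nat.card N := h_card
    _ = Nat.card g.range * Nat.card g.ker := g.card_range_mul_card_ker.symm

theorem annihilator_ker_sub_id_eq_range (hcompat : ∀ x y, e (σ x) (τ y) = e x y)
    (hnd1 : ∀ x, (∀ y, e x y = 0) → x = 0) (hnd2 : ∀ y, (∀ x, e x y = 0) → y = 0) :
    e.annihilator (σ.toAddMonoidHom - .id M).ker = (τ.toAddMonoidHom - .id N).range := by
  refine (AddSubgroup.eq_of_le_of_card_ge (range_sub_id_le_annihilator_ker σ τ hcompat) ?_).symm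
  calc Nat.card (e.annihilator (σ.toAddMonoidHom - .id M).ker)
      ≤ Nat.card (M ⧸ (σ.toAddMonoidHom - .id M).ker) := e.card_annihilator_le hnd2 _
    _ = Nat.card (σ.toAddMonoidHom - .id M).range :=
        Nat.card_congr (QuotientAddGroup.quotientKerEquivRange _).toEquiv
    _ ≤ Nat.card (τ.toAddMonoidHom - .id N).range := card_range_sub_id_le σ τ hcompat hnd1 hnd2

end Counting

theorem stmt_7_general (n : ℕ) (hn : 1 ≤ n)
    (M N : Type*) [AddCommGroup M] [AddCommGroup N] [Finite M] [Finite N]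
    (e : M →+ N →+ ZMod n)
    (hnd1 : ∀ x : M, (∀ y : N, e x y = 0) → x = 0)
    (hnd2 : ∀ y : N, (∀ x : M, e x y = 0) → y = 0)
    (σ : M ≃+ M) (τ : N ≃+ N)
    (hcompat : ∀ x : M, ∀ y : N, e (σ x) (τ y) = e x y)
    (hσ : ∀ x : M, σ (σ x) - 2 • σ x + x = 0) :
    (∀ y : N, (∀ x : M, σ x = x → e x y = 0) → τ y = y) ∧
      (∀ y : N, (∀ x : M, σ x = x → e x y = 0) ↔ ∃ z : N, y = τ z - z) := by
  have : NeZero n := ⟨by omega⟩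
  have h_perp : ∀ y, (∀ x, σ x = x → e x y = 0) ↔
      y ∈ e.annihilator (σ.toAddMonoidHom - .id M).ker := fun y => by
    simp only [AddMonoidHom.mem_annihilator, σ.mem_ker_toAddMonoidHom_sub_id]
  refine ⟨fun y hy => ?_, fun y => ?_⟩
  · have hy' := e.annihilator_anti (σ.range_toAddMonoidHom_sub_id_le_ker hσ) ((h_perp y).mp hy)
    exact τ.mem_ker_toAddMonoidHom_sub_id.mp (annihilator_range_sub_id_le_ker σ τ hcompat hnd2 hy')
  · rw [h_perp, annihilator_ker_sub_id_eq_range σ τ hcompat hnd1 hnd2,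
      τ.mem_range_toAddMonoidHom_sub_id]
    simp only [eq_comm]

theorem stmt_7 (n : ℕ) (hn : 1 ≤ n)
    (M N : Type*) [AddCommGroup M] [AddCommGroup N] [Finite M] [Finite N]
    (hM : ∀ x : M, n • x = 0) (hN : ∀ y : N, n • y = 0)
    (e : M →+ N →+ ZMod n)
    (hnd1 : ∀ x : M, (∀ y : N, e x y = 0) → x = 0)
    (hnd2 : ∀ y : N, (∀ x : M, e x y = 0) → y = 0)
    (σ : M ≃+ M) (τ : N ≃+ N)
    (hcompat : ∀ x : M, ∀ y : N, e (σ x) (τ y) = e x y)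
    (hσ : ∀ x : M, σ (σ x) - 2 • σ x + x = 0) :
    (∀ y : N, (∀ x : M, σ x = x → e x y = 0) → τ y = y) ∧
      (∀ y : N, (∀ x : M, σ x = x → e x y = 0) ↔ ∃ z : N, y = τ z - z) :=
  stmt_7_general n hn M N e hnd1 hnd2 σ τ hcompat hσ
end

section
/- Let γ be an automorphism of a finite free ℤ_ℓ-module T with (γ^R − 1)² = 0 in End(T ⊗ ℚ_ℓ), let n ∈ {2,3,4} with R = R(n) (R(2)=4, R(3)=3, R(4)=2), and let λ = (γ−1)²/n ∈ End(T ⊗ ℚ_ℓ). Define T' = T + λT + λ²T + ... + λ^(R−1)T inside T ⊗ ℚ_ℓ. Then T' is the smallest λ-stable ℤ_ℓ-lattice containing T, and n^(R−1)·T' ⊆ T ⊆ T'. -/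
private lemma aux_smul_cancel {K : Type*} [Field K] {A : Type*} [AddCommGroup A]
    [Module K A] {c : K} (hc : c ≠ 0) {x : A} (h : c • x = 0) : x = 0 := by
  have h2 := congrArg (fun y => c⁻¹ • y) h
  simpa [smul_smul, inv_mul_cancel₀ hc] using h2

private lemma aux_rel4 {K : Type*} [Field K] [CharZero K] {A : Type*} [Ring A] [Algebra K A]
    (g l : A) (hR : (g ^ 2 - 1) ^ 2 = 0) (hl : (4 : K) • l = (g - 1) ^ 2) :
    l ^ 2 = -(l * g) := by
  have hl' : (4 : A) * l = (g - 1) ^ 2 := by rw [← hl, Algebra.smul_def, map_ofNat]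
  have e1 : (16 : A) * (l ^ 2 + l * g)
      = ((4 : A) * l) ^ 2 + (4 : A) * (((4 : A) * l) * g) := by noncomm_ring
  rw [hl'] at e1
  have e2 : ((g - 1) ^ 2) ^ 2 + (4 : A) * ((g - 1) ^ 2 * g) = (g ^ 2 - 1) ^ 2 := by
    noncomm_ring
  rw [e2, hR] at e1
  have e3 : (16 : K) • (l ^ 2 + l * g) = 0 := by rw [Algebra.smul_def, map_ofNat]; exact e1
  have e4 := aux_smul_cancel (show (16 : K) ≠ 0 by norm_num) e3
  exact eq_neg_of_add_eq_zero_left e4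

private lemma aux_rel3 {K : Type*} [Field K] [CharZero K] {A : Type*} [Ring A] [Algebra K A]
    (g l : A) (hR : (g ^ 3 - 1) ^ 2 = 0) (hl : (3 : K) • l = (g - 1) ^ 2) :
    l ^ 3 = l - (2 : K) • (l * g) - (3 : K) • l ^ 2 - (2 : K) • (l ^ 2 * g) := by
  have hl' : (3 : A) * l = (g - 1) ^ 2 := by rw [← hl, Algebra.smul_def, map_ofNat]
  simp only [Algebra.smul_def, map_ofNat]
  rw [← sub_eq_zero]
  have e1 : (27 : A) * (l ^ 3 - (l - (2 : A) * (l * g) - (3 : A) * l ^ 2 - (2 : A) * (l ^ 2 * g)))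
      = ((3 : A) * l) ^ 3 - (9 : A) * ((3 : A) * l) + (18 : A) * (((3 : A) * l) * g)
        + (9 : A) * ((3 : A) * l) ^ 2 + (6 : A) * (((3 : A) * l) ^ 2 * g) := by noncomm_ring
  rw [hl'] at e1
  have e2 : ((g - 1) ^ 2) ^ 3 - (9 : A) * (g - 1) ^ 2 + (18 : A) * ((g - 1) ^ 2 * g)
      + (9 : A) * ((g - 1) ^ 2) ^ 2 + (6 : A) * (((g - 1) ^ 2) ^ 2 * g) = (g ^ 3 - 1) ^ 2 := by
    noncomm_ring
  rw [e2, hR] at e1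
  have e3 : (27 : K) • (l ^ 3 - (l - (2 : A) * (l * g) - (3 : A) * l ^ 2 - (2 : A) * (l ^ 2 * g)))
      = 0 := by rw [Algebra.smul_def, map_ofNat]; exact e1
  exact aux_smul_cancel (show (27 : K) ≠ 0 by norm_num) e3

private lemma aux_rel2 {K : Type*} [Field K] [CharZero K] {A : Type*} [Ring A] [Algebra K A]
    (g l : A) (hR : (g ^ 4 - 1) ^ 2 = 0) (hl : (2 : K) • l = (g - 1) ^ 2) :
    l ^ 4 = (4 : K) • l - (3 : K) • l ^ 2 - (10 : K) • l ^ 3 - (6 : K) • (l * g)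
      - (14 : K) • (l ^ 2 * g) - (4 : K) • (l ^ 3 * g) := by
  have hl' : (2 : A) * l = (g - 1) ^ 2 := by rw [← hl, Algebra.smul_def, map_ofNat]
  simp only [Algebra.smul_def, map_ofNat]
  rw [← sub_eq_zero]
  have e1 : (16 : A) * (l ^ 4 - ((4 : A) * l - (3 : A) * l ^ 2 - (10 : A) * l ^ 3
        - (6 : A) * (l * g) - (14 : A) * (l ^ 2 * g) - (4 : A) * (l ^ 3 * g)))
      = ((2 : A) * l) ^ 4 - (32 : A) * ((2 : A) * l) + (12 : A) * ((2 : A) * l) ^ 2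
        + (20 : A) * ((2 : A) * l) ^ 3 + (48 : A) * (((2 : A) * l) * g)
        + (56 : A) * (((2 : A) * l) ^ 2 * g) + (8 : A) * (((2 : A) * l) ^ 3 * g) := by
    noncomm_ring
  rw [hl'] at e1
  have e2 : ((g - 1) ^ 2) ^ 4 - (32 : A) * (g - 1) ^ 2 + (12 : A) * ((g - 1) ^ 2) ^ 2
      + (20 : A) * ((g - 1) ^ 2) ^ 3 + (48 : A) * ((g - 1) ^ 2 * g)
      + (56 : A) * (((g - 1) ^ 2) ^ 2 * g) + (8 : A) * (((g - 1) ^ 2) ^ 3 * g)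
      = (g ^ 4 - 1) ^ 2 := by noncomm_ring
  rw [e2, hR] at e1
  have e3 : (16 : K) • (l ^ 4 - ((4 : A) * l - (3 : A) * l ^ 2 - (10 : A) * l ^ 3
      - (6 : A) * (l * g) - (14 : A) * (l ^ 2 * g) - (4 : A) * (l ^ 3 * g))) = 0 := by
    rw [Algebra.smul_def, map_ofNat]; exact e1
  exact aux_smul_cancel (show (16 : K) ≠ 0 by norm_num) e3

theorem stmt_11 (ℓ : ℕ) [Fact ℓ.Prime]
    (V : Type*) [AddCommGroup V] [Module ℚ_[ℓ] V] [FiniteDimensional ℚ_[ℓ] V]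
    [Module ℤ_[ℓ] V] [IsScalarTower ℤ_[ℓ] ℚ_[ℓ] V]
    (n R : ℕ) (hnR : (n = 2 ∧ R = 4) ∨ (n = 3 ∧ R = 3) ∨ (n = 4 ∧ R = 2))
    (γ lam : Module.End ℚ_[ℓ] V) (hγ : IsUnit γ)
    (hR : (γ ^ R - 1) ^ 2 = 0)
    (hlam : (n : ℚ_[ℓ]) • lam = (γ - 1) ^ 2)
    (T : Submodule ℤ_[ℓ] V) (hTfg : T.FG)
    (hTspan : Submodule.span ℚ_[ℓ] (T : Set V) = ⊤)
    (hγT : ∀ x : V, x ∈ T ↔ γ x ∈ T)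
    (T' : Submodule ℤ_[ℓ] V)
    (hT' : T' = ⨆ i : Fin R, Submodule.map ((lam ^ (i : ℕ)).restrictScalars ℤ_[ℓ]) T) :
    T'.FG ∧ Submodule.span ℚ_[ℓ] (T' : Set V) = ⊤ ∧
    (∀ x ∈ T', lam x ∈ T') ∧ T ≤ T' ∧
    (∀ L : Submodule ℤ_[ℓ] V, L.FG → Submodule.span ℚ_[ℓ] (L : Set V) = ⊤ →
      T ≤ L → (∀ x ∈ L, lam x ∈ L) → T' ≤ L) ∧
    (∀ x ∈ T', ((n : ℚ_[ℓ]) ^ (R - 1)) • x ∈ T) := by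
  have hR0 : 0 < R := by rcases hnR with ⟨_, h⟩ | ⟨_, h⟩ | ⟨_, h⟩ <;> omega
  -- natural-number scalars preserve ℤ_ℓ-submodules
  have hsc : ∀ (S : Submodule ℤ_[ℓ] V) (k : ℕ) (v : V), v ∈ S → ((k : ℚ_[ℓ])) • v ∈ S := by
    intro S k v hv
    have h1 : ((k : ℚ_[ℓ])) • v = ((k : ℤ_[ℓ])) • v := by
      calc ((k : ℚ_[ℓ])) • v = (algebraMap ℤ_[ℓ] ℚ_[ℓ] ((k : ℤ_[ℓ]))) • v := by rw [map_natCast]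
        _ = ((k : ℤ_[ℓ])) • v := algebraMap_smul _ _ _
    rw [h1]; exact S.smul_mem _ hv
  have hmemT' : ∀ i, i < R → ∀ t ∈ T, (lam ^ i) t ∈ T' := by
    intro i hi t ht
    rw [hT']
    exact le_iSup (fun j : Fin R => Submodule.map ((lam ^ (j : ℕ)).restrictScalars ℤ_[ℓ]) T)
      ⟨i, hi⟩ (Submodule.mem_map_of_mem ht)
  have hTle : T ≤ T' := by
    intro t ht
    have := hmemT' 0 hR0 t ht
    simpa using this
  have h1T' : ∀ t ∈ T, lam t ∈ T' := by
    intro t ht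
    have := hmemT' 1 ?_ t ht
    · rwa [pow_one] at this
    · rcases hnR with ⟨_, h⟩ | ⟨_, h⟩ | ⟨_, h⟩ <;> omega
  -- stability
  have hstab : ∀ x ∈ T', lam x ∈ T' := by
    have key : ∀ t ∈ T, lam ((lam ^ (R - 1)) t) ∈ T' := by
      rcases hnR with ⟨hn, hRe⟩ | ⟨hn, hRe⟩ | ⟨hn, hRe⟩ <;> subst hn <;> subst hRe <;>
        intro t ht
      · -- n = 2, R = 4
        have hl : (2 : ℚ_[ℓ]) • lam = (γ - 1) ^ 2 := by rw [← hlam]; norm_num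
        have hrel := aux_rel2 γ lam hR hl
        have happ : lam ((lam ^ (4 - 1)) t) = (lam ^ 4) t := by
          norm_num [pow_succ']
        rw [happ, hrel]
        simp only [LinearMap.sub_apply, LinearMap.smul_apply, Module.End.mul_apply]
        have hγt : γ t ∈ T := (hγT t).1 ht
        refine sub_mem (sub_mem (sub_mem (sub_mem (sub_mem ?_ ?_) ?_) ?_) ?_) ?_
        · have := hsc T' 4 _ (h1T' t ht); simpa using this
        · have := hsc T' 3 _ (hmemT' 2 (by norm_num) t ht); simpa using this
        · have := hsc T' 10 _ (hmemT' 3 (by norm_num) t ht); simpa using this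
        · have := hsc T' 6 _ (h1T' _ hγt); simpa using this
        · have := hsc T' 14 _ (hmemT' 2 (by norm_num) _ hγt); simpa using this
        · have := hsc T' 4 _ (hmemT' 3 (by norm_num) _ hγt); simpa using this
      · -- n = 3, R = 3
        have hl : (3 : ℚ_[ℓ]) • lam = (γ - 1) ^ 2 := by rw [← hlam]; norm_num
        have hrel := aux_rel3 γ lam hR hl
        have happ : lam ((lam ^ (3 - 1)) t) = (lam ^ 3) t := by
          norm_num [pow_succ']
        rw [happ, hrel]
        simp only [LinearMap.sub_apply, LinearMap.smul_apply, Module.End.mul_apply]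
        have hγt : γ t ∈ T := (hγT t).1 ht
        refine sub_mem (sub_mem (sub_mem ?_ ?_) ?_) ?_
        · exact h1T' t ht
        · have := hsc T' 2 _ (h1T' _ hγt); simpa using this
        · have := hsc T' 3 _ (hmemT' 2 (by norm_num) t ht); simpa using this
        · have := hsc T' 2 _ (hmemT' 2 (by norm_num) _ hγt); simpa using this
      · -- n = 4, R = 2
        have hl : (4 : ℚ_[ℓ]) • lam = (γ - 1) ^ 2 := by rw [← hlam]; norm_num
        have hrel := aux_rel4 γ lam hR hl
        have happ : lam ((lam ^ (2 - 1)) t) = (lam ^ 2) t := by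
          norm_num [pow_succ']
        rw [happ, hrel]
        simp only [LinearMap.neg_apply, Module.End.mul_apply]
        exact neg_mem (h1T' _ ((hγT t).1 ht))
    intro x hx
    suffices hle : T' ≤ Submodule.comap (lam.restrictScalars ℤ_[ℓ]) T' by
      have := hle hx; simpa using this
    conv_lhs => rw [hT']
    apply iSup_le
    rintro ⟨i, hi⟩
    intro x hx
    obtain ⟨t, ht, rfl⟩ := Submodule.mem_map.mp hx
    simp only [Submodule.mem_comap, LinearMap.restrictScalars_apply]
    rcases Nat.lt_or_ge (i + 1) R with h | h
    · have e : lam ((lam ^ i) t) = (lam ^ (i + 1)) t := by rw [pow_succ']; rfl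
      rw [e]; exact hmemT' _ h t ht
    · have e : i = R - 1 := by omega
      subst e
      exact key t ht
  refine ⟨?_, ?_, hstab, hTle, ?_, ?_⟩
  · -- FG
    rw [hT']
    exact Submodule.fg_iSup _ fun i => hTfg.map _
  · -- span
    refine eq_top_iff.mpr ?_
    rw [← hTspan]
    exact Submodule.span_mono fun x hx => hTle hx
  · -- minimality
    intro L _ _ hTL hLstab
    rw [hT']
    apply iSup_le
    rintro ⟨i, hi⟩
    intro x hx
    obtain ⟨t, ht, rfl⟩ := Submodule.mem_map.mp hx
    have : ∀ j, ∀ s ∈ T, (lam ^ j) s ∈ L := by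
      intro j
      induction j with
      | zero => intro s hs; simpa using hTL hs
      | succ k ih =>
        intro s hs
        have e : (lam ^ (k + 1)) s = lam ((lam ^ k) s) := by rw [pow_succ']; rfl
        rw [e]; exact hLstab _ (ih s hs)
    exact this i t ht
  · -- n^(R-1) T' ⊆ T
    have hc : ∀ k, ∀ s ∈ T, (((γ - 1) ^ k : Module.End ℚ_[ℓ] V)) s ∈ T := by
      intro k
      induction k with
      | zero => intro s hs; simpa using hs
      | succ m ih =>
        intro s hs
        have e : (((γ - 1) ^ (m + 1) : Module.End ℚ_[ℓ] V)) s = (((γ - 1) ^ m : Module.End ℚ_[ℓ] V)) (((γ - 1 : Module.End ℚ_[ℓ] V)) s) := by rw [pow_succ]; rfl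
        rw [e]
        apply ih
        have e2 : ((γ - 1 : Module.End ℚ_[ℓ] V)) s = γ s - s := by
          simp [LinearMap.sub_apply]
        rw [e2]
        exact sub_mem ((hγT s).1 hs) hs
    intro x hx
    rw [hT'] at hx
    suffices hle : (⨆ i : Fin R, Submodule.map ((lam ^ (i : ℕ)).restrictScalars ℤ_[ℓ]) T)
        ≤ Submodule.comap ((((n : ℚ_[ℓ]) ^ (R - 1)) • (LinearMap.id : V →ₗ[ℚ_[ℓ]] V)).restrictScalars
          ℤ_[ℓ]) T by
      have := hle hx
      simpa using this
    apply iSup_le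
    rintro ⟨i, hi⟩
    intro x hx'
    obtain ⟨t, ht, rfl⟩ := Submodule.mem_map.mp hx'
    simp only [Submodule.mem_comap, LinearMap.restrictScalars_apply, LinearMap.smul_apply,
      LinearMap.id_apply]
    have e : (n : ℚ_[ℓ]) ^ (R - 1) = (n : ℚ_[ℓ]) ^ (R - 1 - i) * (n : ℚ_[ℓ]) ^ i := by
      rw [← pow_add]; congr 1; omega
    rw [e, mul_smul]
    have e2 : (n : ℚ_[ℓ]) ^ i • ((lam ^ i) t) = ((((γ - 1) ^ 2) ^ i : Module.End ℚ_[ℓ] V)) t := by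
      calc (n : ℚ_[ℓ]) ^ i • ((lam ^ i) t) = (((n : ℚ_[ℓ]) ^ i • lam ^ i)) t :=
            (LinearMap.smul_apply _ _ _).symm
        _ = ((((n : ℚ_[ℓ]) • lam)) ^ i) t := by rw [smul_pow]
        _ = ((((γ - 1) ^ 2) ^ i : Module.End ℚ_[ℓ] V)) t := by rw [hlam]
    rw [e2, ← pow_mul]
    have : ((n ^ (R - 1 - i) : ℕ) : ℚ_[ℓ]) • ((((γ - 1) ^ (2 * i) : Module.End ℚ_[ℓ] V)) t) ∈ T :=
      hsc T _ _ (hc (2 * i) t ht)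
    simpa using this
end

section
/- Let γ ∈ SL₂(ℤ₂) be of finite order with (γ² − 1)² = 0. Then either (γ−1)² = 0 or (γ+1)² = 0; in both cases (γ−1)² ∈ 4·M₂(ℤ₂). -/
/-!
By Cayley–Hamilton, a `2 × 2` matrix `γ` of determinant one with trace `t` satisfies
`(γ - 1)² = (t - 2) • γ` and `(γ + 1)² = (t + 2) • γ`. Hence `(γ² - 1)² = (t² - 4) • γ²`, and
taking determinants gives `(t² - 4)² = 0`, so `t = ±2` over the domain `ℤ₂`. If `t = 2` then
`(γ - 1)² = 0`; if `t = -2` then `(γ + 1)² = 0` and `(γ - 1)² = -4 • γ`.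
-/

namespace Matrix

variable {R : Type*} [CommRing R] {M : Matrix (Fin 2) (Fin 2) R}

lemma sq_eq_trace_smul_sub_one_of_det_eq_one (hM : M.det = 1) : M ^ 2 = M.trace • M - 1 := by
  ext i j
  fin_cases i <;> fin_cases j <;>
    simp [← hM, sq, mul_apply, trace_fin_two, det_fin_two] <;> ring

lemma sub_one_sq_of_det_eq_one (hM : M.det = 1) : (M - 1) ^ 2 = (M.trace - 2) • M := by
  rw [show (M - 1) ^ 2 = M ^ 2 - 2 • M + 1 by noncomm_ring,
    sq_eq_trace_smul_sub_one_of_det_eq_one hM]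
  module

lemma add_one_sq_of_det_eq_one (hM : M.det = 1) : (M + 1) ^ 2 = (M.trace + 2) • M := by
  rw [show (M + 1) ^ 2 = M ^ 2 + 2 • M + 1 by noncomm_ring,
    sq_eq_trace_smul_sub_one_of_det_eq_one hM]
  module

lemma trace_eq_two_or_eq_neg_two_of_sq_sub_one_sq_eq_zero [NoZeroDivisors R] (hM : M.det = 1)
    (h : (M ^ 2 - 1) ^ 2 = 0) : M.trace = 2 ∨ M.trace = -2 := by
  have hfactor : (M ^ 2 - 1) ^ 2 = ((M.trace - 2) * (M.trace + 2)) • M ^ 2 := by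
    rw [show (M ^ 2 - 1) ^ 2 = (M - 1) ^ 2 * (M + 1) ^ 2 by noncomm_ring,
      sub_one_sq_of_det_eq_one hM, add_one_sq_of_det_eq_one hM, smul_mul_smul_comm, ← sq]
  have hdet := congrArg det (hfactor.symm.trans h)
  rw [det_smul, det_pow, hM, one_pow, mul_one, det_zero, Fintype.card_fin,
    pow_eq_zero_iff two_ne_zero, mul_eq_zero, sub_eq_zero, add_eq_zero_iff_eq_neg] at hdet
  exact hdet

end Matrix

open Matrix in
theorem stmt_12_general (γ : Matrix (Fin 2) (Fin 2) ℤ_[2])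
    (hdet : γ.det = 1)
    (h : (γ ^ 2 - 1) ^ 2 = 0) :
    ((γ - 1) ^ 2 = 0 ∨ (γ + 1) ^ 2 = 0) ∧
      ∃ B : Matrix (Fin 2) (Fin 2) ℤ_[2], (γ - 1) ^ 2 = (4 : ℤ_[2]) • B := by
  rcases trace_eq_two_or_eq_neg_two_of_sq_sub_one_sq_eq_zero hdet h with ht | ht
  · have hsub : (γ - 1) ^ 2 = 0 := by simp [sub_one_sq_of_det_eq_one hdet, ht]
    exact ⟨.inl hsub, 0, by simp [hsub]⟩
  · refine ⟨.inr (by simp [add_one_sq_of_det_eq_one hdet, ht]), -γ, ?_⟩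
    rw [sub_one_sq_of_det_eq_one hdet, ht]
    module

theorem stmt_12 (γ : Matrix (Fin 2) (Fin 2) ℤ_[2])
    (hdet : γ.det = 1)
    (hord : ∃ k : ℕ, 1 ≤ k ∧ γ ^ k = 1)
    (h : (γ ^ 2 - 1) ^ 2 = 0) :
    ((γ - 1) ^ 2 = 0 ∨ (γ + 1) ^ 2 = 0) ∧
      ∃ B : Matrix (Fin 2) (Fin 2) ℤ_[2], (γ - 1) ^ 2 = (4 : ℤ_[2]) • B :=
  stmt_12_general γ hdet h
end

section
/- Let d and n be positive integers and suppose that for each prime ℓ dividing n we are given A_ℓ ∈ M_{2d}(ℤ_ℓ) such that the characteristic polynomials of the A_ℓ have integer coefficients independent of ℓ, and (A_ℓ − 1)² ∈ n·M_{2d}(ℤ_ℓ). Then for every eigenvalue α of A_ℓ (in an algebraic closure of ℚ_ℓ), the algebraic number (α−1)/√n is integral over ℤ. -/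
/-!
Put `N = A_ℓ - 1`. Since `det (X² - N²) = det (X - N) · det (X + N)`, the characteristic
polynomial of `N²` is the Graeffe transform `H` of `Q(X) = P(X + 1)`, whose roots are the
squares `(α - 1)²`. So `H` has integer coefficients and does not depend on `ℓ`. On the other
hand `N² = n B` over `ℤ_ℓ`, so `H` is `charpoly B` with its roots scaled by `n`: the coefficient
of `X^i` in `H` is divisible by `n^(deg H - i)` in every `ℤ_ℓ` with `ℓ ∣ n`, hence in `ℤ`.
Dividing those coefficients out gives a monic integer polynomial vanishing at `(α - 1)² / n`.
-/

open Polynomial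

namespace Polynomial

variable {R : Type*} [CommRing R]

theorem coeff_comp_neg_X (p : R[X]) (i : ℕ) :
    (p.comp (-X)).coeff i = (-1) ^ i * p.coeff i := by
  rw [show (-X : R[X]) = C (-1) * X by simp, comp_C_mul_X_coeff, mul_comm]

theorem expand_contract_two_of_comp_neg_X_eq [NoZeroDivisors R] [CharZero R] {f : R[X]}
    (hf : f.comp (-X) = f) : expand R 2 (contract 2 f) = f := by
  ext i
  rw [coeff_expand two_pos, coeff_contract two_ne_zero]
  split_ifs with h
  · rw [Nat.div_mul_cancel h]
  · have hi := coeff_comp_neg_X f i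
    rwa [hf, (Nat.not_even_iff_odd.mp (even_iff_two_dvd.not.mpr h)).neg_one_pow, neg_one_mul,
      eq_comm, CharZero.neg_eq_self_iff, eq_comm] at hi

/-- Graeffe's root-squaring transform: if `p = ∏ (X - rᵢ)`, then `graeffe p = ∏ (X - rᵢ²)`.
The sign makes `graeffe p` monic when `p` is. -/
noncomputable def graeffe (p : R[X]) : R[X] :=
  contract 2 (p * ((-1) ^ p.natDegree * p.comp (-X)))

section CharZero

variable [NoZeroDivisors R] [CharZero R]

theorem expand_graeffe (p : R[X]) :
    expand R 2 (graeffe p) = p * ((-1) ^ p.natDegree * p.comp (-X)) := by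
  apply expand_contract_two_of_comp_neg_X_eq
  rw [mul_comp_neg_X, mul_comp_neg_X, comp_neg_X_comp_neg_X, pow_comp, neg_comp, one_comp]
  ring

theorem Monic.graeffe {p : R[X]} (hp : p.Monic) : p.graeffe.Monic := by
  rw [← monic_expand_iff two_pos, expand_graeffe]
  exact hp.mul hp.neg_one_pow_natDegree_mul_comp_neg_X

theorem IsRoot.graeffe_sq {p : R[X]} {z : R} (hz : p.IsRoot z) : p.graeffe.IsRoot (z ^ 2) := by
  rw [IsRoot, ← expand_eval, expand_graeffe, eval_mul, hz.eq_zero, zero_mul]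

end CharZero

theorem graeffe_map {S : Type*} [CommRing S] {f : R →+* S} (hf : Function.Injective f)
    (p : R[X]) : (p.map f).graeffe = p.graeffe.map f := by
  simp only [graeffe, map_contract two_ne_zero, Polynomial.map_mul, Polynomial.map_pow,
    Polynomial.map_neg, Polynomial.map_one, map_comp, map_X, natDegree_map_eq_of_injective hf]

theorem exists_monic_scaleRoots_eq {p : R[X]} (hp : p.Monic) {s : R}
    (h : ∀ i, s ^ (p.natDegree - i) ∣ p.coeff i) :
    ∃ q : R[X], q.Monic ∧ q.scaleRoots s = p := by
  nontriviality R
  choose f hf using h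
  set N := p.natDegree
  have hfN : f N = 1 := by
    simpa [N, hp.coeff_natDegree, eq_comm] using hf N
  let q : R[X] := ∑ i ∈ Finset.range (N + 1), monomial i (f i)
  have hq : ∀ i, q.coeff i = if i ≤ N then f i else 0 := fun i => by
    simp [q, finsetSum_coeff, coeff_monomial]
  have hqdeg : q.natDegree = N := by
    refine natDegree_eq_of_le_of_coeff_ne_zero ?_ (by simp [hq, hfN])
    exact natDegree_sum_le_of_forall_le _ _ fun i hi => (natDegree_monomial_le _).trans
      (Nat.lt_succ_iff.mp (Finset.mem_range.mp hi))
  have hqs : q.scaleRoots s = p := by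
    ext i
    rw [coeff_scaleRoots, hqdeg, hq]
    split_ifs with hi
    · rw [hf i, mul_comm]
    · rw [zero_mul, coeff_eq_zero_of_natDegree_lt (not_le.mp hi)]
  exact ⟨q, (monic_scaleRoots_iff s).mp (hqs ▸ hp), hqs⟩

theorem pow_dvd_coeff_of_map_eq_scaleRoots {S : Type*} [CommRing S] {f : R →+* S}
    (hf : Function.Injective f) {p : R[X]} {q : S[X]} {s : R}
    (h : p.map f = q.scaleRoots (f s)) (i : ℕ) :
    f s ^ (p.natDegree - i) ∣ f (p.coeff i) := by
  rw [← coeff_map, h, coeff_scaleRoots, ← natDegree_scaleRoots q (f s), ← h,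
    natDegree_map_eq_of_injective hf]
  exact dvd_mul_left _ _

end Polynomial

namespace Matrix

variable {n R : Type*} [Fintype n] [DecidableEq n] [CommRing R]

theorem charpoly_comp (M : Matrix n n R) (q : R[X]) :
    M.charpoly.comp q = (scalar n q - (C : R →+* R[X]).mapMatrix M).det := by
  rw [charpoly, ← coe_compRingHom_apply, RingHom.map_det, charmatrix, map_sub]
  congr 2
  · ext i j
    by_cases h : i = j <;> simp [h]
  · ext i j
    simp

theorem charpoly_neg (M : Matrix n n R) :
    (-M).charpoly = (-1) ^ Fintype.card n * M.charpoly.comp (-X) := by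
  have h : scalar n (-X) - (C : R →+* R[X]).mapMatrix M = -charmatrix (-M) := by
    simp [charmatrix, map_neg, sub_eq_add_neg, add_comm]
  rw [charpoly_comp, h, det_neg, ← charpoly, ← mul_assoc, ← pow_add,
    Even.neg_one_pow ⟨_, rfl⟩, one_mul]

theorem charpoly_mul_charpoly_neg (M : Matrix n n R) :
    M.charpoly * (-M).charpoly = expand R 2 (M ^ 2).charpoly := by
  have h : charmatrix M * charmatrix (-M)
      = scalar n (X ^ 2) - (C : R →+* R[X]).mapMatrix (M ^ 2) := by
    have hc := (scalar_commute (X : R[X]) (fun r => Commute.all _ _)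
      ((C : R →+* R[X]).mapMatrix M)).eq
    simp only [charmatrix, map_neg, sub_neg_eq_add, sub_mul, mul_add, ← hc, pow_two, map_mul]
    abel
  rw [expand_eq_comp_X_pow, charpoly_comp, ← h, det_mul, charpoly, charpoly]

theorem charpoly_sq [Nontrivial R] (M : Matrix n n R) :
    (M ^ 2).charpoly = M.charpoly.graeffe := by
  rw [graeffe, charpoly_natDegree_eq_dim, ← charpoly_neg, charpoly_mul_charpoly_neg,
    contract_expand 2 two_ne_zero]

theorem charpoly_smul [IsDomain R] {c : R} (hc : c ≠ 0) (M : Matrix n n R) :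
    (c • M).charpoly = M.charpoly.scaleRoots c := by
  have hcomp : (c • M).charpoly.comp (C c * X) = C (c ^ Fintype.card n) * M.charpoly := by
    have h : scalar n (C c * X) - (C : R →+* R[X]).mapMatrix (c • M)
        = C c • charmatrix M := by
      ext i j
      by_cases h : i = j <;> simp [h, charmatrix, mul_sub]
    rw [charpoly_comp, h, det_smul, charpoly, C_pow]
  ext i
  have hi := congrArg (coeff · i) hcomp
  simp only [comp_C_mul_X_coeff, coeff_C_mul] at hi
  rw [coeff_scaleRoots, charpoly_natDegree_eq_dim]
  rcases le_or_gt i (Fintype.card n) with hle | hlt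
  · apply mul_right_cancel₀ (pow_ne_zero i hc)
    rw [hi, mul_assoc, ← pow_add, Nat.sub_add_cancel hle, mul_comm]
  · rw [coeff_eq_zero_of_natDegree_lt (by rwa [charpoly_natDegree_eq_dim]),
      coeff_eq_zero_of_natDegree_lt (by rwa [charpoly_natDegree_eq_dim]), zero_mul]

end Matrix

theorem IsIntegral.of_aeval_algebraMap_mul_eq_zero {R A : Type*} [CommRing R] [CommRing A]
    [IsDomain A] [Algebra R A] {p : R[X]} (hp : p.Monic) {s : R}
    (hdvd : ∀ i, s ^ (p.natDegree - i) ∣ p.coeff i) (hs : algebraMap R A s ≠ 0) {y : A}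
    (hy : aeval (algebraMap R A s * y) p = 0) : IsIntegral R y := by
  obtain ⟨q, hq, rfl⟩ := exists_monic_scaleRoots_eq hp hdvd
  refine ⟨q, hq, ?_⟩
  have h := scaleRoots_eval₂_mul (p := q) (algebraMap R A) y s
  rw [← aeval_def, hy, eq_comm, mul_eq_zero] at h
  exact h.resolve_left (pow_ne_zero _ hs)

theorem Int.natCast_dvd_of_forall_padicInt_dvd {m : ℕ} {c : ℤ}
    (h : ∀ (ℓ : ℕ) [Fact ℓ.Prime], ℓ ∣ m → (m : ℤ_[ℓ]) ∣ c) : (m : ℤ) ∣ c := by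
  rw [Int.natCast_dvd, Nat.dvd_iff_prime_pow_dvd_dvd]
  intro ℓ k hℓ hdvd
  rcases Nat.eq_zero_or_pos k with rfl | hk
  · exact one_dvd _
  have : Fact ℓ.Prime := ⟨hℓ⟩
  have hpow : (ℓ : ℤ_[ℓ]) ^ k ∣ c := by
    refine dvd_trans ?_ (h ℓ ((dvd_pow_self ℓ hk.ne').trans hdvd))
    exact_mod_cast Nat.cast_dvd_cast (α := ℤ_[ℓ]) hdvd
  rw [PadicInt.pow_p_dvd_int_iff] at hpow
  exact_mod_cast Int.natCast_dvd.mp hpow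

theorem stmt_13_general (d n : ℕ) (hn : 1 ≤ n)
    (P : Polynomial ℤ) (hP : P.Monic)
    (A : ∀ (ℓ : ℕ) [Fact ℓ.Prime], ℓ ∣ n → Matrix (Fin (2 * d)) (Fin (2 * d)) ℤ_[ℓ])
    (hchar : ∀ (ℓ : ℕ) [Fact ℓ.Prime] (h : ℓ ∣ n),
      (A ℓ h).charpoly = P.map (Int.castRingHom ℤ_[ℓ]))
    (hcong : ∀ (ℓ : ℕ) [Fact ℓ.Prime] (h : ℓ ∣ n),
      ∃ B : Matrix (Fin (2 * d)) (Fin (2 * d)) ℤ_[ℓ],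
        (A ℓ h - 1) ^ 2 = (n : ℤ_[ℓ]) • B) :
    ∀ α : ℂ, (P.map (Int.castRingHom ℂ)).IsRoot α →
      IsIntegral ℤ ((α - 1) / (Real.sqrt n : ℂ)) := by
  intro α hα
  have hn₀ : n ≠ 0 := by omega
  set H := (P.comp (X + C 1)).graeffe
  have hlocal (ℓ : ℕ) [Fact ℓ.Prime] (h : ℓ ∣ n) :
      ∃ B : Matrix (Fin (2 * d)) (Fin (2 * d)) ℤ_[ℓ],
        H.map (Int.castRingHom ℤ_[ℓ]) = B.charpoly.scaleRoots (n : ℤ_[ℓ]) := by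
    obtain ⟨B, hB⟩ := hcong ℓ h
    refine ⟨B, ?_⟩
    rw [← graeffe_map (RingHom.injective_int _), map_comp, ← hchar ℓ h,
      show (X + C 1 : ℤ[X]).map (Int.castRingHom ℤ_[ℓ]) = X + C 1 by simp,
      ← Matrix.charpoly_sub_scalar, map_one, ← Matrix.charpoly_sq, hB,
      Matrix.charpoly_smul (Nat.cast_ne_zero.mpr hn₀)]
  have hdvd (i : ℕ) : (n : ℤ) ^ (H.natDegree - i) ∣ H.coeff i := by
    refine mod_cast Int.natCast_dvd_of_forall_padicInt_dvd fun ℓ _ hℓ => ?_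
    obtain ⟨B, hB⟩ := hlocal ℓ ((Fact.out : ℓ.Prime).dvd_of_dvd_pow hℓ)
    have h := pow_dvd_coeff_of_map_eq_scaleRoots (RingHom.injective_int (Int.castRingHom ℤ_[ℓ]))
      (s := (n : ℤ)) (by simpa using hB) i
    simpa using h
  have hroot : aeval ((α - 1) ^ 2) H = 0 := by
    have hα' : ((P.comp (X + C 1)).map (Int.castRingHom ℂ)).IsRoot (α - 1) := by
      rw [IsRoot, Polynomial.map_comp, eval_comp]
      simpa using hα
    rw [aeval_def, eval₂_eq_eval_map, algebraMap_int_eq,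
      ← graeffe_map (RingHom.injective_int _)]
    exact hα'.graeffe_sq
  have hsq : algebraMap ℤ ℂ n * ((α - 1) / (Real.sqrt n : ℂ)) ^ 2 = (α - 1) ^ 2 := by
    rw [div_pow, ← Complex.ofReal_pow, Real.sq_sqrt n.cast_nonneg, algebraMap_int_eq,
      eq_intCast, Int.cast_natCast, Complex.ofReal_natCast]
    exact mul_div_cancel₀ _ (Nat.cast_ne_zero.mpr hn₀)
  exact (IsIntegral.of_aeval_algebraMap_mul_eq_zero ((hP.comp_X_add_C 1).graeffe) hdvd
    (by simpa using hn₀) (hsq ▸ hroot)).of_pow two_pos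

theorem stmt_13 (d n : ℕ) (hd : 1 ≤ d) (hn : 1 ≤ n)
    (P : Polynomial ℤ) (hP : P.Monic) (hdeg : P.natDegree = 2 * d)
    (A : ∀ (ℓ : ℕ) [Fact ℓ.Prime], ℓ ∣ n → Matrix (Fin (2 * d)) (Fin (2 * d)) ℤ_[ℓ])
    (hchar : ∀ (ℓ : ℕ) [Fact ℓ.Prime] (h : ℓ ∣ n),
      (A ℓ h).charpoly = P.map (Int.castRingHom ℤ_[ℓ]))
    (hcong : ∀ (ℓ : ℕ) [Fact ℓ.Prime] (h : ℓ ∣ n),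
      ∃ B : Matrix (Fin (2 * d)) (Fin (2 * d)) ℤ_[ℓ],
        (A ℓ h - 1) ^ 2 = (n : ℤ_[ℓ]) • B) :
    ∀ α : ℂ, (P.map (Int.castRingHom ℂ)).IsRoot α →
      IsIntegral ℤ ((α - 1) / (Real.sqrt n : ℂ)) :=
  stmt_13_general d n hn P hP A hchar hcong
end

section
/- Let α be a root of unity in ℂ with (α−1)² ∈ 2·ℤ̄ (where ℤ̄ is the ring of algebraic integers). Then α⁴ = 1. -/
/-!
Put `γ = β + α - 1`, so that `α ^ 2 = 1 + 2γ` and `α ^ 4 - 1 = 4γ(1 + γ)`. Thus `ζ = α ^ 4` is a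
root of unity with `ζ - 1` divisible by `4` among algebraic integers. In the number field `ℚ(ζ)`
every conjugate of `ζ - 1` has absolute value at most `2`, so `|N(ζ - 1)| ≤ 2 ^ d`, whereas
`N(ζ - 1) = 4 ^ d N((ζ - 1) / 4)` with `N((ζ - 1) / 4)` a nonzero integer unless `ζ = 1`.
-/

open IntermediateField

namespace NumberField

variable {K : Type*} [Field K] [NumberField K]

theorem one_le_abs_norm_of_isIntegral {x : K} (hx : IsIntegral ℤ x) (hx0 : x ≠ 0) :
    1 ≤ |Algebra.norm ℚ x| := by
  obtain ⟨n, hn⟩ := IsIntegrallyClosed.isIntegral_iff.mp (Algebra.isIntegral_norm ℚ hx)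
  have hn0 : n ≠ 0 := by
    rintro rfl
    exact Algebra.norm_ne_zero_iff.mpr hx0 (by rw [← hn, map_zero])
  rw [← hn, eq_intCast]
  exact_mod_cast Int.one_le_abs hn0

theorem abs_norm_le_of_forall_norm_embedding_le {x : K} {c : ℝ}
    (hc : ∀ σ : K →ₐ[ℚ] ℂ, ‖σ x‖ ≤ c) :
    |(Algebra.norm ℚ x : ℝ)| ≤ c ^ Module.finrank ℚ K := by
  have hcast : ((Algebra.norm ℚ x : ℝ) : ℂ) = algebraMap ℚ ℂ (Algebra.norm ℚ x) := by simp
  rw [← Real.norm_eq_abs, ← Complex.norm_real, hcast, Algebra.norm_eq_prod_embeddings, norm_prod,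
    ← AlgHom.card ℚ K ℂ, ← Finset.card_univ, ← Finset.prod_const]
  exact Finset.prod_le_prod (fun _ _ => norm_nonneg _) fun σ _ => hc σ

theorem abs_norm_sub_one_le_of_pow_eq_one {ζ : K} {k : ℕ} (hk : k ≠ 0) (hζ : ζ ^ k = 1) :
    |(Algebra.norm ℚ (ζ - 1) : ℝ)| ≤ 2 ^ Module.finrank ℚ K := by
  refine abs_norm_le_of_forall_norm_embedding_le fun σ => ?_
  have hσζ : ‖σ ζ‖ = 1 := Complex.norm_eq_one_of_pow_eq_one (by rw [← map_pow, hζ, map_one]) hk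
  calc ‖σ (ζ - 1)‖ = ‖σ ζ - 1‖ := by rw [map_sub, map_one]
    _ ≤ ‖σ ζ‖ + ‖(1 : ℂ)‖ := norm_sub_le _ _
    _ = 2 := by rw [hσζ, norm_one]; norm_num

theorem eq_one_of_pow_eq_one_of_sub_one_eq_mul {ζ γ : K} {k m : ℕ} (hk : k ≠ 0)
    (hζ : ζ ^ k = 1) (hm : 2 < m) (hγ : IsIntegral ℤ γ) (hζγ : ζ - 1 = m * γ) : ζ = 1 := by
  by_contra hne
  have hγ0 : γ ≠ 0 := by
    rintro rfl
    exact hne (sub_eq_zero.mp (by rw [hζγ, mul_zero]))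
  have hnorm : Algebra.norm ℚ (ζ - 1) = m ^ Module.finrank ℚ K * Algebra.norm ℚ γ := by
    rw [hζγ, map_mul, ← map_natCast (algebraMap ℚ K), Algebra.norm_algebraMap]
  have hlower : (m : ℝ) ^ Module.finrank ℚ K ≤ |(Algebra.norm ℚ (ζ - 1) : ℝ)| := by
    have := one_le_abs_norm_of_isIntegral hγ hγ0
    rw [hnorm]
    push_cast
    rw [abs_mul, abs_pow, Nat.abs_cast]
    exact le_mul_of_one_le_right (by positivity) (by exact_mod_cast this)
  have hupper := abs_norm_sub_one_le_of_pow_eq_one hk hζ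
  have : (2 : ℝ) ^ Module.finrank ℚ K < (m : ℝ) ^ Module.finrank ℚ K :=
    pow_lt_pow_left₀ (by exact_mod_cast hm) zero_le_two Module.finrank_pos.ne'
  linarith

end NumberField

theorem Complex.eq_one_of_pow_eq_one_of_sub_one_eq_mul {ζ γ : ℂ} {k m : ℕ} (hk : k ≠ 0)
    (hζ : ζ ^ k = 1) (hm : 2 < m) (hγ : IsIntegral ℤ γ) (hζγ : ζ - 1 = m * γ) : ζ = 1 := by
  have hζint : IsIntegral ℚ ζ := .of_pow (Nat.pos_of_ne_zero hk) (hζ ▸ isIntegral_one)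
  have : FiniteDimensional ℚ ℚ⟮ζ⟯ := adjoin.finiteDimensional hζint
  have : NumberField ℚ⟮ζ⟯ := ⟨⟩
  let z : ℚ⟮ζ⟯ := AdjoinSimple.gen ℚ ζ
  have hm0 : (m : ℂ) ≠ 0 := by exact_mod_cast (show m ≠ 0 by omega)
  have hγz : algebraMap ℚ⟮ζ⟯ ℂ ((z - 1) / m) = γ := by
    rw [map_div₀, map_sub, map_one, map_natCast, div_eq_iff hm0, mul_comm, ← hζγ]
    rfl
  have hzk : z ^ k = 1 :=
    Subtype.ext (by rw [SubmonoidClass.coe_pow, AdjoinSimple.coe_gen, hζ]; rfl)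
  have hz1 : z = 1 := by
    refine NumberField.eq_one_of_pow_eq_one_of_sub_one_eq_mul (γ := (z - 1) / m) hk hzk hm ?_ ?_
    · rwa [← isIntegral_algebraMap_iff (algebraMap ℚ⟮ζ⟯ ℂ).injective, hγz]
    · rw [mul_div_cancel₀ _ (Nat.cast_ne_zero.mpr (by omega))]
  simpa [z] using congrArg (algebraMap ℚ⟮ζ⟯ ℂ) hz1

theorem stmt_15 (α : ℂ) (hord : ∃ k : ℕ, 1 ≤ k ∧ α ^ k = 1)
    (h : ∃ β : ℂ, IsIntegral ℤ β ∧ (α - 1) ^ 2 = 2 * β) :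
    α ^ 4 = 1 := by
  obtain ⟨k, hk, hαk⟩ := hord
  obtain ⟨β, hβ, hβeq⟩ := h
  have hαint : IsIntegral ℤ α := .of_pow hk (hαk ▸ isIntegral_one)
  set γ := β + α - 1
  have hγ : IsIntegral ℤ γ := (hβ.add hαint).sub isIntegral_one
  have hα2 : α ^ 2 = 1 + 2 * γ := by linear_combination hβeq
  refine Complex.eq_one_of_pow_eq_one_of_sub_one_eq_mul (k := k) (m := 4) (γ := γ * (1 + γ))
    (by omega) (by rw [← pow_mul, mul_comm, pow_mul, hαk, one_pow]) (by norm_num)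
    (hγ.mul (isIntegral_one.add hγ)) ?_
  push_cast
  linear_combination (α ^ 2 + 1 + 2 * γ) * hα2
end

section
/- Let α be a root of unity in ℂ with (α−1)² ∈ 3·ℤ̄. Then α³ = 1. -/
/-! If `α` has order `n`, then `n = ∏_{0<k<n} (1 - α^k)` and each factor is `1 - α` times an
algebraic integer, so `n = z (α - 1)^(n-1)` with `z` integral. Squaring and substituting
`(α - 1)^2 = 3β` gives `n² = 3^(n-1) · β^(n-1) z²`, so the rational number `n² / 3^(n-1)` is an
algebraic integer, hence an integer. But `3^(n-1) ∣ n²` only for `n = 1` and `n = 3`. -/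

theorem Int.dvd_of_intCast_eq_mul {K : Type*} [Field K] [CharZero K] {a b : ℤ} (hb : b ≠ 0)
    {γ : K} (hγ : IsIntegral ℤ γ) (h : (a : K) = b * γ) : b ∣ a := by
  have hγ_rat : γ = ((a / b : ℚ) : K) := by
    push_cast; exact eq_div_of_mul_eq (by exact_mod_cast hb) (by rw [mul_comm, h])
  obtain ⟨k, hk⟩ := (hγ.exists_int_iff_exists_rat).mp ⟨_, hγ_rat⟩
  exact ⟨k, by exact_mod_cast hk ▸ h⟩

theorem IsPrimitiveRoot.pow_dvd_sq_of_sub_one_sq_eq_mul {K : Type*} [Field K] [CharZero K]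
    {ζ : K} {n : ℕ} (hζ : IsPrimitiveRoot ζ n) (hn : 0 < n) {c : ℤ} (hc : c ≠ 0) {β : K}
    (hβ : IsIntegral ℤ β) (h : (ζ - 1) ^ 2 = c * β) : c ^ (n - 1) ∣ (n : ℤ) ^ 2 := by
  obtain ⟨z, hz_mem, hz⟩ := hζ.self_sub_one_pow_dvd_order (Nat.sub_one_lt hn.ne')
  have hz_int : IsIntegral ℤ z := adjoin_le_integralClosure (hζ.isIntegral hn) hz_mem
  refine Int.dvd_of_intCast_eq_mul (K := K) (pow_ne_zero _ hc)
    ((hβ.pow (n - 1)).mul (hz_int.pow 2)) ?_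
  calc (((n : ℤ) ^ 2 : ℤ) : K) = z ^ 2 * ((ζ - 1) ^ 2) ^ (n - 1) := by
        push_cast; rw [hz, mul_pow, ← pow_mul, ← pow_mul, mul_comm 2]
    _ = _ := by rw [h]; push_cast; ring

theorem Nat.succ_sq_lt_three_pow {m : ℕ} (hm : 3 ≤ m) : (m + 1) ^ 2 < 3 ^ m := by
  induction m, hm using Nat.le_induction with
  | base => norm_num
  | succ m _ ih => rw [pow_succ 3 m]; nlinarith

theorem Nat.dvd_three_of_three_pow_dvd_sq {n : ℕ} (hn : 0 < n) (h : 3 ^ (n - 1) ∣ n ^ 2) :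
    n ∣ 3 := by
  obtain ⟨m, rfl⟩ := Nat.exists_eq_add_one_of_ne_zero hn.ne'
  rw [Nat.add_sub_cancel] at h
  rcases Nat.lt_or_ge m 3 with hlt | hge
  · interval_cases m <;> omega
  · exact absurd (Nat.le_of_dvd (by positivity) h) (Nat.succ_sq_lt_three_pow hge).not_ge

theorem stmt_16 (α : ℂ) (hord : ∃ k : ℕ, 1 ≤ k ∧ α ^ k = 1)
    (h : ∃ β : ℂ, IsIntegral ℤ β ∧ (α - 1) ^ 2 = 3 * β) :
    α ^ 3 = 1 := by
  obtain ⟨k, hk1, hk⟩ := hord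
  obtain ⟨β, hβ, hsq⟩ := h
  have hpos : 0 < orderOf α := orderOf_pos_iff.mpr (isOfFinOrder_iff_pow_eq_one.mpr ⟨k, hk1, hk⟩)
  have hdvd := (IsPrimitiveRoot.orderOf α).pow_dvd_sq_of_sub_one_sq_eq_mul hpos three_ne_zero hβ
    (by exact_mod_cast hsq)
  exact orderOf_dvd_iff_pow_eq_one.mp
    (Nat.dvd_three_of_three_pow_dvd_sq hpos (by exact_mod_cast hdvd))
end

section
/- Let α be a root of unity in ℂ with (α−1)² ∈ n·ℤ̄ for some integer n ≥ 5. Then α = 1. -/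
/-!
Every conjugate of `α` has absolute value 1, so every conjugate of the algebraic integer
`β = (α - 1)² / n` has absolute value at most `4 / n < 1`. A nonzero algebraic integer has a
conjugate of absolute value at least 1 (its norm is a nonzero integer), hence `β = 0` and `α = 1`.
-/

open IntermediateField NumberField

theorem Complex.norm_sub_one_sq_le_four {z : ℂ} (hz : ‖z‖ = 1) : ‖(z - 1) ^ 2‖ ≤ 4 := by
  have : ‖z - 1‖ ≤ 2 := (norm_sub_le z 1).trans (by norm_num [hz])
  rw [norm_pow]
  nlinarith [norm_nonneg (z - 1)]

theorem NumberField.eq_one_of_pow_eq_one_of_isIntegral_sub_one_sq_div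
    {K : Type*} [Field K] [NumberField K] {x : K} {k : ℕ} (hk : k ≠ 0) (hx : x ^ k = 1)
    {n : ℕ} (hn : 4 < n) (h : IsIntegral ℤ ((x - 1) ^ 2 / n)) : x = 1 := by
  by_contra hx1
  have hne : (⟨_, h⟩ : 𝓞 K) ≠ 0 := fun h0 ↦ by
    have : (x - 1) ^ 2 / (n : K) = 0 := congrArg RingOfIntegers.val h0
    rw [div_eq_zero_iff, pow_eq_zero_iff two_ne_zero, sub_eq_zero, Nat.cast_eq_zero] at this
    exact this.elim hx1 (by omega)
  obtain ⟨σ, hσ⟩ := exists_conjugate_one_le_norm hne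
  have hσx : ‖σ x‖ = 1 :=
    Complex.norm_eq_one_of_pow_eq_one (by rw [← map_pow, hx, map_one]) hk
  have hn' : (4 : ℝ) < n := by exact_mod_cast hn
  have : ‖σ ((x - 1) ^ 2 / n)‖ < 1 := by
    rw [map_div₀, map_pow, map_sub, map_one, map_natCast, norm_div, Complex.norm_natCast,
      div_lt_one (by linarith)]
    exact (Complex.norm_sub_one_sq_le_four hσx).trans_lt hn'
  exact this.not_ge hσ

theorem stmt_17 (n : ℕ) (hn : 5 ≤ n) (α : ℂ) (hord : ∃ k : ℕ, 1 ≤ k ∧ α ^ k = 1)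
    (h : ∃ β : ℂ, IsIntegral ℤ β ∧ (α - 1) ^ 2 = (n : ℂ) * β) :
    α = 1 := by
  obtain ⟨k, hk, hαk⟩ := hord
  obtain ⟨β, hβ, hαβ⟩ := h
  have hαint : IsIntegral ℚ α := .of_pow hk (by rw [hαk]; exact isIntegral_one)
  have : FiniteDimensional ℚ ℚ⟮α⟯ := adjoin.finiteDimensional hαint
  have : NumberField ℚ⟮α⟯ := ⟨⟩
  set a := AdjoinSimple.gen ℚ α
  have hβ_eq : algebraMap ℚ⟮α⟯ ℂ ((a - 1) ^ 2 / n) = β := by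
    rw [map_div₀, map_pow, map_sub, map_one, map_natCast, AdjoinSimple.algebraMap_gen, hαβ,
      mul_div_cancel_left₀ _ (Nat.cast_ne_zero.mpr (by omega))]
  have hak : a ^ k = 1 := Subtype.ext (by simpa [a] using hαk)
  have ha : a = 1 := eq_one_of_pow_eq_one_of_isIntegral_sub_one_sq_div (by omega) hak hn
    ((isIntegral_algebraMap_iff (algebraMap ℚ⟮α⟯ ℂ).injective).mp (hβ_eq ▸ hβ))
  simpa [a] using congrArg (algebraMap ℚ⟮α⟯ ℂ) ha
end
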